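/- arXiv:2301.05414 — 2 statements merged into one kernel-verified Lean document; each statement's English description precedes it below -/
import Mathlib

section
/- (Theorem 1, Integral 1.) Let m ≥ 1, n ≥ 0. Suppose: (i) L_{(N)i₁...i_m}(q), N = 0,…,n, are smooth m-th order generalized Killing tensors of Γ; (ii) if m > 1 and n > 0, L_{(k)i₁...i_m} = −(1/k) L_{(k−1)(i₁...i_{m−1}|i_m)} for k = 1,…,n; (iii) if m > 1, L_{(n)i₁...i_{m−1}} is an (m−1)-th order generalized Killing tensor; (iv) L_{(n)a}Q^a = s₀ is a constant; (v) G(q) is smooth with G_{,i₁} = 2L_{(0)i₁i₂}Q^{i₂} − L_{(1)i₁}, where the first term on the right is present only if m > 1 and the second only if n > 0; (vi) if n > 0, for k = 1,…,n: (L_{(k−1)c}Q^c)_{,i₁} = 2k L_{(k)i₁i₂}Q^{i₂} − k(k+1) L_{(k+1)i₁}, the first term present only if m > 1 and the second only if k < n; (vii) if m > 2, for k = 0,…,n and r = 2,…,m−1: L_{(k)(i₁...i_{r−1}|i_r)} = (r+1) L_{(k)i₁...i_r i_{r+1}} Q^{i_{r+1}} − (k+1) L_{(k+1)i₁...i_r},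 the last term present only if k < n. Then I = Σ_{r=1}^{m} (Σ_{N=0}^{n} L_{(N)i₁...i_r} t^N) q̇^{i₁}⋯q̇^{i_r} + s₀ t^{n+1}/(n+1) + Σ_{N=1}^{n} (L_{(N−1)c}Q^c) t^N/N + G(q) is a first integral of q̈^a = −Γ^a_{bc}q̇^bq̇^c − Q^a. -/
noncomputable section
open scoped BigOperators

/-- Points of the configuration space `ℝ^D`. -/
abbrev Vec (D : ℕ) := Fin D → ℝ

/-- Connection coefficients: `Conn D Γ` with `Γ q a b c = Γ^a_{bc}(q)`. -/
abbrev Conn (D : ℕ) := Vec D → Fin D → Fin D → Fin D → ℝ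

/-- Totally covariant `r`-tensor fields on `ℝ^D`. -/
abbrev Tens (D r : ℕ) := Vec D → (Fin r → Fin D) → ℝ

/-- Partial derivative `∂f/∂q^j`. -/
def pd {D : ℕ} (j : Fin D) (f : Vec D → ℝ) (q : Vec D) : ℝ :=
  fderiv ℝ f q (Pi.single j 1)

/-- Covariant derivative `T_{i₁...i_r|j}` (the last slot is the derivative index `j`):
`T_{i₁...i_r|j} = ∂T_{i₁...i_r}/∂q^j − Σ_k Γ^s_{i_k j} T_{i₁...s...i_r}`. -/
def covTens {D r : ℕ} (Γ : Conn D) (T : Tens D r) : Tens D (r + 1) :=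
  fun q idx =>
    pd (idx (Fin.last r)) (fun p => T p fun k => idx k.castSucc) q
      - ∑ k : Fin r, ∑ s : Fin D,
          Γ q s (idx k.castSucc) (idx (Fin.last r)) *
            T q (Function.update (fun l => idx l.castSucc) k s)

/-- Symmetrization of a tensor over all of its indices. -/
def symT {D r : ℕ} (T : Tens D r) : Tens D r :=
  fun q idx => (r.factorial : ℝ)⁻¹ * ∑ σ : Equiv.Perm (Fin r), T q (idx ∘ σ)

/-- Totally symmetric tensor field. -/
def IsSymTens {D r : ℕ} (T : Tens D r) : Prop :=
  ∀ (q : Vec D) (idx : Fin r → Fin D) (σ : Equiv.Perm (Fin r)), T q (idx ∘ σ) = T q idx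

/-- Smooth tensor field. -/
def SmoothTens {D r : ℕ} (T : Tens D r) : Prop :=
  ∀ idx : Fin r → Fin D, ContDiff ℝ (⊤ : ℕ∞) fun q => T q idx

/-- Generalized Killing tensor of order `r` for the connection `Γ`:
`T_{(i₁...i_r|i_{r+1})} = 0`. -/
def IsGenKT {D r : ℕ} (Γ : Conn D) (T : Tens D r) : Prop :=
  ∀ q idx, symT (covTens Γ T) q idx = 0

/-- `q, v` solve `q̈^a = -Γ^a_{bc}(q) q̇^b q̇^c - Q^a(q)` on the set `s ⊆ ℝ`. -/
def IsSolutionOn {D : ℕ} (Γ : Conn D) (Q : Vec D → Fin D → ℝ)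
    (s : Set ℝ) (q v : ℝ → Vec D) : Prop :=
  ∀ t ∈ s, ∀ a : Fin D,
    HasDerivAt (fun τ => q τ a) (v t a) t ∧
    HasDerivAt (fun τ => v τ a)
      (-(∑ b, ∑ c, Γ (q t) a b c * v t b * v t c) - Q (q t) a) t

/-- `I(t,q,q̇)` is a first integral of the system: it is constant along every
(C²) solution defined on an open interval. -/
def FirstIntegral {D : ℕ} (Γ : Conn D) (Q : Vec D → Fin D → ℝ)
    (I : ℝ → Vec D → Vec D → ℝ) : Prop :=
  ∀ (a b : ℝ) (q v : ℝ → Vec D), IsSolutionOn Γ Q (Set.Ioo a b) q v →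
    ∀ t₁ ∈ Set.Ioo a b, ∀ t₂ ∈ Set.Ioo a b,
      I t₁ (q t₁) (v t₁) = I t₂ (q t₂) (v t₂)

/-- The contraction `L_c Q^c` of a rank-1 tensor with the generalized forces. -/
def dotQ {D : ℕ} (L : Tens D 1) (Q : Vec D → Fin D → ℝ) (q : Vec D) : ℝ :=
  ∑ c, L q (fun _ => c) * Q q c

/-!
Along a solution, the time derivative of `T_{i₁…i_r}(q) q̇^{i₁}⋯q̇^{i_r}` for a symmetric `T` is
`T_{i₁…i_r|i_{r+1}} q̇^{i₁}⋯q̇^{i_{r+1}} − r T_{i₁…i_{r−1}c} Q^c q̇^{i₁}⋯q̇^{i_{r−1}}`: the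
connection terms of the equations of motion are exactly those of the covariant derivative, and
only the symmetrized derivative survives the contraction. With the absent components set to zero,
conditions (i)–(iii) and (vii) become the single relation
`L_{(N)(i₁…i_ρ|i_{ρ+1})} = (ρ+2) L_{(N)i₁…i_{ρ+1}c} Q^c − (N+1) L_{(N+1)i₁…i_{ρ+1}}`
for all `1 ≤ ρ ≤ m`, `N ≤ n`. Substituted into `dI/dt`, the velocity-dependent part telescopes
both in the rank and in the power of `t`, down to rank-0 and rank-1 terms, which (iv)–(vi) cancel
against the derivative of the velocity-independent part.
-/

open Finset

section Tuples

variable {α : Type*}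

lemma sum_fun_insertNth [Fintype α] {r : ℕ} (k : Fin (r + 1)) (g : (Fin (r + 1) → α) → ℝ) :
    ∑ idx, g idx = ∑ c, ∑ x : Fin r → α, g (Fin.insertNth k c x) := by
  rw [← Fintype.sum_prod_type']
  exact (Fintype.sum_equiv (Fin.insertNthEquiv (fun _ => α) k) _ _ fun _ => rfl).symm

lemma sum_fun_snoc [Fintype α] {r : ℕ} (g : (Fin (r + 1) → α) → ℝ) :
    ∑ idx, g idx = ∑ c, ∑ x : Fin r → α, g (Fin.snoc x c) := by
  simp_rw [sum_fun_insertNth (Fin.last r), Fin.insertNth_last']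

lemma prod_erase_eq_prod_succAbove {M : Type*} [CommMonoid M] {r : ℕ} (k : Fin (r + 1))
    (f : Fin (r + 1) → M) : ∏ l ∈ univ.erase k, f l = ∏ i, f (k.succAbove i) := by
  rw [Fin.univ_succAbove _ k, erase_cons, prod_map]
  rfl

lemma prod_comp_update {M : Type*} [CommMonoid M] {r : ℕ} (V : α → M) (f : Fin r → α)
    (k : Fin r) (s : α) :
    ∏ l, V (Function.update f k s l) = V s * ∏ l ∈ univ.erase k, V (f l) := by
  simp_rw [Function.apply_update (fun _ => V)]
  rw [prod_update_of_mem (mem_univ k), sdiff_singleton_eq_erase]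

lemma sum_update_swap [Fintype α] {r : ℕ} (k : Fin r) (h : (Fin r → α) → α → ℝ) :
    ∑ f : Fin r → α, ∑ s, h f s = ∑ f : Fin r → α, ∑ s, h (Function.update f k s) (f k) := by
  have hinv : Function.Involutive
      fun p : (Fin r → α) × α => (Function.update p.1 k p.2, p.1 k) := fun p => by
    simp [Function.update_idem]
  simp_rw [← Fintype.sum_prod_type']
  exact (Equiv.sum_comp (hinv.toPerm _) fun p => h p.1 p.2).symm

end Tuples

lemma sum_range_mul_pow_pred (n : ℕ) (t : ℝ) (f : ℕ → ℝ) (hf : f (n + 1) = 0) :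
    ∑ N ∈ range (n + 1), f N * (N * t ^ (N - 1)) =
      ∑ N ∈ range (n + 1), (N + 1) * f (N + 1) * t ^ N := by
  rw [sum_range_succ', sum_range_succ, hf]
  simp only [Nat.cast_add, Nat.cast_one, add_tsub_cancel_right, Nat.cast_zero, zero_mul,
    add_zero, mul_zero]
  exact sum_congr rfl fun N _ => by ring

lemma sum_range_sub_two (m : ℕ) (f : ℕ → ℝ) :
    ∑ r ∈ range m, (f (r + 2) - f r) = f m + f (m + 1) - f 0 - f 1 := by
  have h := sum_range_sub (fun r => f r + f (r + 1)) m
  rw [zero_add] at h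
  rw [sub_sub, ← h]
  exact sum_congr rfl fun r _ => by ring

/-- With `a N ρ = L_{(N)i₁…i_ρ} q̇^{i₁}⋯q̇^{i_ρ}` and `b N ρ = L_{(N)i₁…i_ρc} Q^c q̇^{i₁}⋯q̇^{i_ρ}`,
the summand is the time derivative of `t^N a N (r + 1)` along a solution. -/
lemma sum_kinetic_telescope {m n : ℕ} (t : ℝ) (a b : ℕ → ℕ → ℝ)
    (ha_m : ∀ N, a N (m + 1) = 0) (ha_n : ∀ ρ, a (n + 1) ρ = 0)
    (hb_m : ∀ N, b N m = 0) (hb_m' : ∀ N, b N (m + 1) = 0) :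
    ∑ r ∈ range m, ∑ N ∈ range (n + 1),
        ((((r : ℝ) + 3) * b N (r + 2) - (N + 1) * a (N + 1) (r + 2) - (r + 1) * b N r) * t ^ N
          + a N (r + 1) * (N * t ^ (N - 1))) =
      ∑ N ∈ range (n + 1), t ^ N * ((N + 1) * a (N + 1) 1 - b N 0 - 2 * b N 1) := by
  have hb : ∀ N, ∑ r ∈ range m, (((r : ℝ) + 3) * b N (r + 2) - (r + 1) * b N r) =
      -b N 0 - 2 * b N 1 := fun N => by
    have := sum_range_sub_two m fun r => ((r : ℝ) + 1) * b N r
    push_cast at this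
    simp only [hb_m, hb_m'] at this
    convert this using 2 <;> ring
  have ha : ∀ N, ∑ r ∈ range m, (a N (r + 1) - a N (r + 2)) = a N 1 := fun N => by
    rw [sum_range_sub' (fun r => a N (r + 1)), ha_m, sub_zero]
  rw [sum_congr rfl fun r _ => by
    rw [sum_add_distrib, sum_range_mul_pow_pred n t (fun N => a N (r + 1)) (ha_n _),
      ← sum_add_distrib], sum_comm]
  refine sum_congr rfl fun N _ => ?_
  calc _ = t ^ N * (∑ r ∈ range m, (((r : ℝ) + 3) * b N (r + 2) - (r + 1) * b N r)
          + (N + 1) * ∑ r ∈ range m, (a (N + 1) (r + 1) - a (N + 1) (r + 2))) := by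
        rw [mul_sum, mul_add, mul_sum, mul_sum, ← sum_add_distrib]
        exact sum_congr rfl fun r _ => by ring
    _ = _ := by rw [hb, ha]; ring

section Contractions

variable {D : ℕ}

def velContract {r : ℕ} (T : Tens D r) (q v : Vec D) : ℝ :=
  ∑ idx : Fin r → Fin D, T q idx * ∏ k, v (idx k)

def forceContract {r : ℕ} (T : Tens D (r + 1)) (Q : Vec D → Fin D → ℝ) : Tens D r :=
  fun q idx => ∑ c, T q (Fin.snoc idx c) * Q q c

lemma IsSymTens.apply_insertNth {r : ℕ} {T : Tens D (r + 1)} (hT : IsSymTens T) (q : Vec D)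
    (k : Fin (r + 1)) (c : Fin D) (x : Fin r → Fin D) :
    T q (Fin.insertNth k c x) = T q (Fin.snoc x c) := by
  have hcons : ∀ k, T q (Fin.insertNth k c x) = T q (Fin.cons c x) := fun k => by
    rw [← Fin.insertNth_comp_cycleRange_symm, hT]
  rw [hcons, ← Fin.insertNth_last', hcons]

lemma velContract_symT {r : ℕ} (T : Tens D r) (q v : Vec D) :
    velContract (symT T) q v = velContract T q v := by
  have hperm : ∀ σ : Equiv.Perm (Fin r),
      ∑ idx : Fin r → Fin D, T q (idx ∘ σ) * ∏ k, v (idx k) = velContract T q v := fun σ => by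
    refine Fintype.sum_equiv (σ.symm.arrowCongr (Equiv.refl _)) _ _ fun idx => ?_
    change _ = T q (idx ∘ σ) * ∏ k, v (idx (σ k))
    rw [Equiv.prod_comp σ fun k => v (idx k)]
  unfold velContract at hperm ⊢
  simp only [symT, mul_assoc, sum_mul, ← mul_sum]
  rw [sum_comm]
  simp only [hperm, sum_const, card_univ, Fintype.card_perm, Fintype.card_fin,
    nsmul_eq_mul, ← mul_assoc]
  rw [inv_mul_cancel₀ (by positivity), one_mul]

lemma covTens_snoc {r : ℕ} (Γ : Conn D) (T : Tens D r) (q : Vec D) (x : Fin r → Fin D)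
    (c : Fin D) :
    covTens Γ T q (Fin.snoc x c) =
      pd c (fun p => T p x) q - ∑ k, ∑ s, Γ q s (x k) c * T q (Function.update x k s) := by
  simp [covTens]

lemma sum_christoffel_update {r : ℕ} (Γ : Conn D) (T : Tens D r) (q v : Vec D) (k : Fin r) :
    ∑ x : Fin r → Fin D, ∑ s, ∑ c,
        Γ q s (x k) c * T q (Function.update x k s) * ((∏ l, v (x l)) * v c) =
      ∑ x : Fin r → Fin D, T q x *
        ((∏ l ∈ univ.erase k, v (x l)) * ∑ b, ∑ c, Γ q (x k) b c * v b * v c) := by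
  rw [sum_update_swap k]
  refine sum_congr rfl fun x _ => ?_
  simp only [Function.update_self, Function.update_idem, Function.update_eq_self,
    prod_comp_update, mul_sum]
  refine sum_congr rfl fun b _ => sum_congr rfl fun c _ => ?_
  ring

lemma velContract_covTens {r : ℕ} (Γ : Conn D) (T : Tens D r) (q v : Vec D) :
    velContract (covTens Γ T) q v =
      ∑ x : Fin r → Fin D,
        ((∑ j, pd j (fun p => T p x) q * v j) * ∏ k, v (x k)
          - T q x * ∑ k, (∏ l ∈ univ.erase k, v (x l)) *
              ∑ b, ∑ c, Γ q (x k) b c * v b * v c) := by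
  unfold velContract
  rw [sum_fun_snoc, sum_comm]
  simp only [covTens_snoc, Fin.prod_univ_castSucc, Fin.snoc_castSucc, Fin.snoc_last, sub_mul,
    sum_sub_distrib, sum_mul]
  congr 1
  · exact sum_congr rfl fun x _ => sum_congr rfl fun c _ => by ring
  · conv_lhs => enter [2, x]; rw [sum_comm]; enter [2, k]; rw [sum_comm]
    conv_rhs => enter [2, x]; rw [mul_sum]
    rw [sum_comm, sum_comm (s := univ) (t := univ) (f := fun x k => T q x * _)]
    refine sum_congr rfl fun k _ => ?_
    rw [← sum_christoffel_update]

lemma IsSymTens.velContract_forceContract {r : ℕ} {T : Tens D (r + 1)} (hT : IsSymTens T)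
    (Q : Vec D → Fin D → ℝ) (q v : Vec D) :
    (r + 1) * velContract (forceContract T Q) q v =
      ∑ x : Fin (r + 1) → Fin D, T q x * ∑ k, (∏ l ∈ univ.erase k, v (x l)) * Q q (x k) := by
  have hslot : ∀ k : Fin (r + 1), velContract (forceContract T Q) q v =
      ∑ x : Fin (r + 1) → Fin D, T q x * ((∏ l ∈ univ.erase k, v (x l)) * Q q (x k)) := by
    intro k
    rw [sum_fun_insertNth k, sum_comm]
    simp only [velContract, forceContract, sum_mul, hT.apply_insertNth,
      prod_erase_eq_prod_succAbove, Fin.insertNth_apply_succAbove, Fin.insertNth_apply_same]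
    exact sum_congr rfl fun x _ => sum_congr rfl fun c _ => by ring
  simp only [mul_sum]
  rw [sum_comm, sum_congr rfl fun k _ => (hslot k).symm]
  simp

lemma velContract_one (T : Tens D 1) (q v : Vec D) :
    velContract T q v = ∑ i, T q (fun _ => i) * v i := by
  refine Fintype.sum_equiv (Equiv.funUnique (Fin 1) (Fin D)) _ _ fun x => ?_
  simp only [Fin.prod_univ_one, Equiv.funUnique_apply]
  congr
  exact funext fun k => congrArg x (Subsingleton.elim k _)

lemma forceContract_apply_one (T : Tens D 2) (Q : Vec D → Fin D → ℝ) (q : Vec D) (i : Fin D) :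
    forceContract T Q q (fun _ => i) = ∑ j, T q ![i, j] * Q q j := by
  refine sum_congr rfl fun j _ => ?_
  congr
  ext k
  fin_cases k <;> rfl

lemma velContract_forceContract_eq_dotQ (T : Tens D 1) (Q : Vec D → Fin D → ℝ) (q v : Vec D) :
    velContract (forceContract T Q) q v = dotQ T Q q := by
  simp only [velContract, forceContract, dotQ, Finset.univ_unique, sum_singleton,
    univ_eq_empty, prod_empty, mul_one]
  refine sum_congr rfl fun c _ => congrArg (· * Q q c) (congrArg (T q) ?_)
  ext k
  fin_cases k
  rfl

lemma sum_pd_mul_eq_of_pd_eq {f : Vec D → ℝ} {Q : Vec D → Fin D → ℝ} {p v : Vec D} {T₂ : Tens D 2}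
    {T₁ : Tens D 1} {α β : ℝ}
    (hf : ∀ i, pd i f p = α * (∑ j, T₂ p ![i, j] * Q p j) - β * T₁ p fun _ => i) :
    ∑ j, pd j f p * v j =
      α * velContract (forceContract T₂ Q) p v - β * velContract T₁ p v := by
  simp only [hf, velContract_one, forceContract_apply_one]
  rw [mul_sum, mul_sum, ← sum_sub_distrib]
  exact sum_congr rfl fun i _ => by ring

lemma sum_mul_prod_eq_sum_velContract {r n : ℕ} (T : ℕ → Tens D r) (q v : Vec D) (t : ℝ) :
    ∑ idx : Fin r → Fin D, (∑ N ∈ range n, T N q idx * t ^ N) * ∏ k, v (idx k) =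
      ∑ N ∈ range n, velContract (T N) q v * t ^ N := by
  simp only [velContract, sum_mul]
  rw [sum_comm]
  exact sum_congr rfl fun N _ => sum_congr rfl fun idx _ => by ring

end Contractions

section Solutions

variable {D : ℕ} {Γ : Conn D} {Q : Vec D → Fin D → ℝ} {s : Set ℝ} {q v : ℝ → Vec D} {t : ℝ}

lemma IsSolutionOn.hasDerivAt_comp (hsol : IsSolutionOn Γ Q s q v) (ht : t ∈ s)
    {f : Vec D → ℝ} (hf : Differentiable ℝ f) :
    HasDerivAt (fun τ => f (q τ)) (∑ j, pd j f (q t) * v t j) t := by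
  have hq : HasDerivAt q (v t) t := hasDerivAt_pi.2 fun a => (hsol t ht a).1
  refine ((hf (q t)).hasFDerivAt.comp_hasDerivAt t hq).congr_deriv ?_
  conv_lhs => rw [← Finset.univ_sum_single (v t)]
  refine (map_sum _ _ _).trans (sum_congr rfl fun j _ => ?_)
  rw [pd, mul_comm, ← smul_eq_mul, ← map_smul, ← Pi.single_smul', smul_eq_mul, mul_one]

lemma IsSolutionOn.hasDerivAt_velContract (hsol : IsSolutionOn Γ Q s q v) (ht : t ∈ s)
    {r : ℕ} {T : Tens D (r + 1)} (hT : IsSymTens T)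
    (hTd : ∀ idx, Differentiable ℝ fun p => T p idx) :
    HasDerivAt (fun τ => velContract T (q τ) (v τ))
      (velContract (covTens Γ T) (q t) (v t)
        - (r + 1) * velContract (forceContract T Q) (q t) (v t)) t := by
  have hvel : ∀ a, HasDerivAt (fun τ => v τ a)
      (-(∑ b, ∑ c, Γ (q t) a b c * v t b * v t c) - Q (q t) a) t := fun a => (hsol t ht a).2
  refine (HasDerivAt.fun_sum fun idx _ => (hsol.hasDerivAt_comp ht (hTd idx)).mul
    (HasDerivAt.fun_finsetProd fun k _ => hvel (idx k))).congr_deriv ?_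
  rw [velContract_covTens, hT.velContract_forceContract, ← sum_sub_distrib]
  refine sum_congr rfl fun x _ => ?_
  simp only [smul_eq_mul, mul_sub, mul_neg, sum_sub_distrib, sum_neg_distrib]
  ring

lemma FirstIntegral.of_hasDerivAt {I : ℝ → Vec D → Vec D → ℝ}
    (h : ∀ a b q v, IsSolutionOn Γ Q (Set.Ioo a b) q v →
      ∀ t ∈ Set.Ioo a b, HasDerivAt (fun τ => I τ (q τ) (v τ)) 0 t) :
    FirstIntegral Γ Q I := fun a b q v hsol _ ht₁ _ ht₂ =>
  isOpen_Ioo.is_const_of_deriv_eq_zero isPreconnected_Ioo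
    (fun t ht => (h a b q v hsol t ht).differentiableAt.differentiableWithinAt)
    (fun t ht => (h a b q v hsol t ht).deriv) ht₁ ht₂

end Solutions

section FirstIntegral

variable {D m n : ℕ} {Γ : Conn D} {Q : Vec D → Fin D → ℝ} {L : ℕ → (r : ℕ) → Tens D r}

lemma symT_covTens_eq_of_hierarchy
    (hLm : ∀ N r, m < r → L N r = 0) (hLn : ∀ r, L (n + 1) r = 0)
    (hKT : ∀ N, N ≤ n → IsGenKT Γ (L N m))
    (hrec : ∀ m₀, m = m₀ + 1 → 1 ≤ m₀ → ∀ k, 1 ≤ k → k ≤ n →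
      ∀ q (idx : Fin (m₀ + 1) → Fin D),
        L k (m₀ + 1) q idx = -(1 / (k : ℝ)) * symT (covTens Γ (L (k - 1) m₀)) q idx)
    (hKT' : ∀ m₀, m = m₀ + 1 → 1 ≤ m₀ → IsGenKT Γ (L n m₀))
    (hc2 : ∀ k, k ≤ n → ∀ ρ, 1 ≤ ρ → ρ + 2 ≤ m →
      ∀ q (idx : Fin (ρ + 1) → Fin D),
        symT (covTens Γ (L k ρ)) q idx =
          ((ρ + 2 : ℕ) : ℝ) * (∑ j, L k (ρ + 2) q (Fin.snoc idx j) * Q q j)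
            - ((k + 1 : ℕ) : ℝ) * L (k + 1) (ρ + 1) q idx)
    {N ρ : ℕ} (hN : N ≤ n) (hρ : 1 ≤ ρ) (hρm : ρ ≤ m) (q : Vec D) (idx : Fin (ρ + 1) → Fin D) :
    symT (covTens Γ (L N ρ)) q idx =
      ((ρ + 2 : ℕ) : ℝ) * forceContract (L N (ρ + 2)) Q q idx
        - ((N + 1 : ℕ) : ℝ) * L (N + 1) (ρ + 1) q idx := by
  obtain hρ2 | rfl | rfl : ρ + 2 ≤ m ∨ m = ρ + 1 ∨ m = ρ := by omega
  · exact hc2 N hN ρ hρ hρ2 q idx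
  · rw [hLm N (ρ + 2) (by omega)]
    obtain hNn | rfl := hN.lt_or_eq
    · have h := hrec ρ rfl hρ (N + 1) (by omega) hNn q idx
      rw [Nat.add_sub_cancel] at h
      rw [h]
      simp only [forceContract, Pi.zero_apply, zero_mul, sum_const_zero, mul_zero, zero_sub]
      field_simp
    · simp [forceContract, hLn, hKT' ρ rfl hρ q idx]
  · simp [forceContract, hLm N (m + 2) (by omega), hLm (N + 1) (m + 1) (by omega), hKT N hN q idx]

variable {s : Set ℝ} {q v : ℝ → Vec D} {t : ℝ}

lemma IsSolutionOn.hasDerivAt_kinetic (hsol : IsSolutionOn Γ Q s q v) (ht : t ∈ s)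
    (hLsym : ∀ N r, IsSymTens (L N r)) (hLd : ∀ N r idx, Differentiable ℝ fun p => L N r p idx)
    (hLm : ∀ N r, m < r → L N r = 0) (hLn : ∀ r, L (n + 1) r = 0)
    (hhier : ∀ N ρ, N ≤ n → 1 ≤ ρ → ρ ≤ m → ∀ p idx,
      symT (covTens Γ (L N ρ)) p idx =
        ((ρ + 2 : ℕ) : ℝ) * forceContract (L N (ρ + 2)) Q p idx
          - ((N + 1 : ℕ) : ℝ) * L (N + 1) (ρ + 1) p idx) :
    HasDerivAt
      (fun τ => ∑ r ∈ range m, ∑ N ∈ range (n + 1), velContract (L N (r + 1)) (q τ) (v τ) * τ ^ N)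
      (∑ N ∈ range (n + 1), t ^ N *
        ((N + 1) * velContract (L (N + 1) 1) (q t) (v t)
          - velContract (forceContract (L N 1) Q) (q t) (v t)
          - 2 * velContract (forceContract (L N 2) Q) (q t) (v t))) t := by
  have hcov : ∀ N ≤ n, ∀ r < m, velContract (covTens Γ (L N (r + 1))) (q t) (v t) =
      (r + 3) * velContract (forceContract (L N (r + 3)) Q) (q t) (v t)
        - (N + 1) * velContract (L (N + 1) (r + 2)) (q t) (v t) := fun N hN r hr => by
    rw [← velContract_symT]
    simp only [velContract, hhier N (r + 1) hN (by omega) (by omega), sub_mul, mul_assoc,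
      sum_sub_distrib, ← mul_sum]
    push_cast
    ring
  refine (HasDerivAt.fun_sum fun r hr => HasDerivAt.fun_sum fun N hN =>
    ((hsol.hasDerivAt_velContract ht (hLsym N (r + 1)) (hLd N (r + 1))).mul
      (hasDerivAt_pow N t))).congr_deriv ?_
  rw [← sum_kinetic_telescope t (fun N ρ => velContract (L N ρ) (q t) (v t))
    (fun N ρ => velContract (forceContract (L N (ρ + 1)) Q) (q t) (v t))]
  · refine sum_congr rfl fun r hr => sum_congr rfl fun N hN => ?_
    rw [hcov N (by simpa [Nat.lt_succ_iff] using hN) r (by simpa using hr)]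
  all_goals simp [velContract, forceContract, hLm, hLn]

lemma IsSolutionOn.hasDerivAt_potential (hsol : IsSolutionOn Γ Q s q v) (ht : t ∈ s)
    {G : Vec D → ℝ} {s₀ : ℝ} (hφd : ∀ N, Differentiable ℝ (dotQ (L N 1) Q))
    (hGd : Differentiable ℝ G) (hs₀ : ∀ p, dotQ (L n 1) Q p = s₀)
    (hGc : ∀ p (i : Fin D),
      pd i G p = 2 * (∑ j, L 0 2 p ![i, j] * Q p j) - L 1 1 p fun _ => i)
    (hc1 : ∀ k, 1 ≤ k → k ≤ n → ∀ p (i : Fin D),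
      pd i (dotQ (L (k - 1) 1) Q) p =
        2 * (k : ℝ) * (∑ j, L k 2 p ![i, j] * Q p j)
          - (k : ℝ) * ((k : ℝ) + 1) * L (k + 1) 1 p fun _ => i) :
    HasDerivAt
      (fun τ => s₀ * τ ^ (n + 1) / ((n + 1 : ℕ) : ℝ)
        + (∑ N ∈ range n, dotQ (L N 1) Q (q τ) * τ ^ (N + 1) / ((N + 1 : ℕ) : ℝ)) + G (q τ))
      (∑ N ∈ range (n + 1), t ^ N *
        (velContract (forceContract (L N 1) Q) (q t) (v t)
          + 2 * velContract (forceContract (L N 2) Q) (q t) (v t)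
          - (N + 1) * velContract (L (N + 1) 1) (q t) (v t))) t := by
  set e : ℕ → ℝ := fun N => 2 * velContract (forceContract (L N 2) Q) (q t) (v t)
    - (N + 1) * velContract (L (N + 1) 1) (q t) (v t)
  have hG : HasDerivAt (fun τ => G (q τ)) (e 0) t := by
    refine (hsol.hasDerivAt_comp ht hGd).congr_deriv ?_
    rw [sum_pd_mul_eq_of_pd_eq (T₂ := L 0 2) (T₁ := L 1 1) (α := 2) (β := 1)
      fun i => by rw [hGc, one_mul]]
    simp [e]
  have hφ : ∀ N ∈ range n, HasDerivAt
      (fun τ => dotQ (L N 1) Q (q τ) * τ ^ (N + 1) / ((N + 1 : ℕ) : ℝ))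
      (t ^ N * dotQ (L N 1) Q (q t) + t ^ (N + 1) * e (N + 1)) t := by
    intro N hN
    have hgrad := hc1 (N + 1) (by omega) (by simpa using hN)
    rw [Nat.add_sub_cancel] at hgrad
    refine (((hsol.hasDerivAt_comp ht (hφd N)).mul (hasDerivAt_pow _ t)).div_const _).congr_deriv ?_
    rw [sum_pd_mul_eq_of_pd_eq (hgrad (q t))]
    simp only [e]
    field_simp
    push_cast
    ring
  refine ((((hasDerivAt_pow (n + 1) t).const_mul s₀).div_const _).add
    (HasDerivAt.fun_sum hφ)).add hG |>.congr_deriv ?_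
  have hsplit : ∀ N, t ^ N * (velContract (forceContract (L N 1) Q) (q t) (v t)
        + 2 * velContract (forceContract (L N 2) Q) (q t) (v t)
        - (N + 1) * velContract (L (N + 1) 1) (q t) (v t)) =
      t ^ N * dotQ (L N 1) Q (q t) + t ^ N * e N := fun N => by
    rw [velContract_forceContract_eq_dotQ]
    ring
  simp only [hsplit, sum_add_distrib]
  rw [sum_range_succ _ n, hs₀, sum_range_succ' _ n, Nat.add_sub_cancel]
  field_simp
  ring

end FirstIntegral

/-- `L N r` is `L_{(N)i₁...i_r}`; components outside the admissible range (`r = 0`, `r > m` or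
`N > n`) vanish, which encodes all the "present only if" conventions of the theorem. -/
theorem stmt1_general {D m n : ℕ} (Γ : Conn D) (Q : Vec D → Fin D → ℝ)
    (hQ : ∀ a, ContDiff ℝ (⊤ : ℕ∞) fun q => Q q a)
    (L : ℕ → (r : ℕ) → Tens D r) (G : Vec D → ℝ) (s₀ : ℝ)
    (hLsm : ∀ N r, SmoothTens (L N r))
    (hLsym : ∀ N r, IsSymTens (L N r))
    (hG : ContDiff ℝ (⊤ : ℕ∞) G)
    (hL0 : ∀ N r, r = 0 ∨ m < r ∨ n < N → L N r = fun _ _ => 0)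
    -- (i) the `L_{(N)i₁...i_m}`, `N = 0,…,n`, are m-th order generalized KTs
    (hKT : ∀ N, N ≤ n → IsGenKT Γ (L N m))
    -- (ii) for `m > 1`, `n > 0`: `L_{(k)i₁...i_m} = −(1/k) L_{(k−1)(i₁...i_{m−1}|i_m)}`
    (hrec : ∀ m₀, m = m₀ + 1 → 1 ≤ m₀ → ∀ k, 1 ≤ k → k ≤ n →
      ∀ q (idx : Fin (m₀ + 1) → Fin D),
        L k (m₀ + 1) q idx = -(1 / (k : ℝ)) * symT (covTens Γ (L (k - 1) m₀)) q idx)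
    -- (iii) for `m > 1`, `L_{(n)i₁...i_{m−1}}` is an (m−1)-th order generalized KT
    (hKT' : ∀ m₀, m = m₀ + 1 → 1 ≤ m₀ → IsGenKT Γ (L n m₀))
    -- (iv) `L_{(n)a} Q^a = s₀` is a constant
    (hs₀ : ∀ q, dotQ (L n 1) Q q = s₀)
    -- (v) `G_{,i₁} = 2 L_{(0)i₁i₂} Q^{i₂} − L_{(1)i₁}`
    (hGc : ∀ q (i : Fin D),
      pd i G q = 2 * (∑ j, L 0 2 q ![i, j] * Q q j) - L 1 1 q fun _ => i)
    -- (vi) `(L_{(k−1)c}Q^c)_{,i₁} = 2k L_{(k)i₁i₂}Q^{i₂} − k(k+1) L_{(k+1)i₁}`, k = 1,…,n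
    (hc1 : ∀ k, 1 ≤ k → k ≤ n → ∀ q (i : Fin D),
      pd i (dotQ (L (k - 1) 1) Q) q =
        2 * (k : ℝ) * (∑ j, L k 2 q ![i, j] * Q q j)
          - (k : ℝ) * ((k : ℝ) + 1) * L (k + 1) 1 q fun _ => i)
    -- (vii) for `k = 0,…,n` and ranks `r = ρ+1 = 2,…,m−1`:
    -- `L_{(k)(i₁...i_{r−1}|i_r)} = (r+1) L_{(k)i₁...i_{r+1}} Q^{i_{r+1}} − (k+1) L_{(k+1)i₁...i_r}`
    (hc2 : ∀ k, k ≤ n → ∀ ρ, 1 ≤ ρ → ρ + 2 ≤ m →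
      ∀ q (idx : Fin (ρ + 1) → Fin D),
        symT (covTens Γ (L k ρ)) q idx =
          ((ρ + 2 : ℕ) : ℝ) * (∑ j, L k (ρ + 2) q (Fin.snoc idx j) * Q q j)
            - ((k + 1 : ℕ) : ℝ) * L (k + 1) (ρ + 1) q idx) :
    FirstIntegral Γ Q (fun t q v =>
      (∑ r ∈ Finset.range m, ∑ idx : Fin (r + 1) → Fin D,
        (∑ N ∈ Finset.range (n + 1), L N (r + 1) q idx * t ^ N) *
          ∏ k : Fin (r + 1), v (idx k))
      + s₀ * t ^ (n + 1) / ((n + 1 : ℕ) : ℝ)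
      + (∑ N ∈ Finset.range n, dotQ (L N 1) Q q * t ^ (N + 1) / ((N + 1 : ℕ) : ℝ))
      + G q) := by
  have hLm : ∀ N r, m < r → L N r = 0 := fun N r h => hL0 N r (Or.inr (Or.inl h))
  have hLn : ∀ r, L (n + 1) r = 0 := fun r => hL0 (n + 1) r (Or.inr (Or.inr n.lt_succ_self))
  have hLd : ∀ N r idx, Differentiable ℝ fun p => L N r p idx :=
    fun N r idx => (hLsm N r idx).differentiable (by simp)
  have hφd : ∀ N, Differentiable ℝ (dotQ (L N 1) Q) := fun N =>
    Differentiable.fun_sum fun c _ => (hLd N 1 _).mul ((hQ c).differentiable (by simp))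
  refine FirstIntegral.of_hasDerivAt fun a b q v hsol t ht => ?_
  have hK := hsol.hasDerivAt_kinetic ht hLsym hLd hLm hLn fun N ρ hN hρ hρm =>
    symT_covTens_eq_of_hierarchy hLm hLn hKT hrec hKT' hc2 hN hρ hρm
  have hP := hsol.hasDerivAt_potential ht hφd (hG.differentiable (by simp)) hs₀ hGc hc1
  refine ((hK.add hP).congr_deriv ?_).congr_of_eventuallyEq (.of_forall fun τ => ?_)
  · rw [← sum_add_distrib]
    exact sum_eq_zero fun N _ => by ring
  · simp only [sum_mul_prod_eq_sum_velContract, Pi.add_apply]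
    ring

/-- Theorem 1, Integral 1. The family `L N r` represents the
totally symmetric tensors `L_{(N)i₁...i_r}`; components outside the admissible
range (`r = 0`, `r > m` or `N > n`) are absent, i.e. vanish, which encodes all
the "present only if" conventions of the theorem. -/
theorem stmt1 {D m n : ℕ} (hm : 1 ≤ m)
    (Γ : Conn D) (Q : Vec D → Fin D → ℝ)
    (hΓsym : ∀ q a b c, Γ q a b c = Γ q a c b)
    (hΓ : ∀ a b c, ContDiff ℝ (⊤ : ℕ∞) fun q => Γ q a b c)
    (hQ : ∀ a, ContDiff ℝ (⊤ : ℕ∞) fun q => Q q a)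
    (L : ℕ → (r : ℕ) → Tens D r) (G : Vec D → ℝ) (s₀ : ℝ)
    (hLsm : ∀ N r, SmoothTens (L N r))
    (hLsym : ∀ N r, IsSymTens (L N r))
    (hG : ContDiff ℝ (⊤ : ℕ∞) G)
    (hL0 : ∀ N r, r = 0 ∨ m < r ∨ n < N → L N r = fun _ _ => 0)
    -- (i) the `L_{(N)i₁...i_m}`, `N = 0,…,n`, are m-th order generalized KTs
    (hKT : ∀ N, N ≤ n → IsGenKT Γ (L N m))
    -- (ii) for `m > 1`, `n > 0`: `L_{(k)i₁...i_m} = −(1/k) L_{(k−1)(i₁...i_{m−1}|i_m)}`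
    (hrec : ∀ m₀, m = m₀ + 1 → 1 ≤ m₀ → ∀ k, 1 ≤ k → k ≤ n →
      ∀ q (idx : Fin (m₀ + 1) → Fin D),
        L k (m₀ + 1) q idx = -(1 / (k : ℝ)) * symT (covTens Γ (L (k - 1) m₀)) q idx)
    -- (iii) for `m > 1`, `L_{(n)i₁...i_{m−1}}` is an (m−1)-th order generalized KT
    (hKT' : ∀ m₀, m = m₀ + 1 → 1 ≤ m₀ → IsGenKT Γ (L n m₀))
    -- (iv) `L_{(n)a} Q^a = s₀` is a constant
    (hs₀ : ∀ q, dotQ (L n 1) Q q = s₀)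
    -- (v) `G_{,i₁} = 2 L_{(0)i₁i₂} Q^{i₂} − L_{(1)i₁}`
    (hGc : ∀ q (i : Fin D),
      pd i G q = 2 * (∑ j, L 0 2 q ![i, j] * Q q j) - L 1 1 q fun _ => i)
    -- (vi) `(L_{(k−1)c}Q^c)_{,i₁} = 2k L_{(k)i₁i₂}Q^{i₂} − k(k+1) L_{(k+1)i₁}`, k = 1,…,n
    (hc1 : ∀ k, 1 ≤ k → k ≤ n → ∀ q (i : Fin D),
      pd i (dotQ (L (k - 1) 1) Q) q =
        2 * (k : ℝ) * (∑ j, L k 2 q ![i, j] * Q q j)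
          - (k : ℝ) * ((k : ℝ) + 1) * L (k + 1) 1 q fun _ => i)
    -- (vii) for `k = 0,…,n` and ranks `r = ρ+1 = 2,…,m−1`:
    -- `L_{(k)(i₁...i_{r−1}|i_r)} = (r+1) L_{(k)i₁...i_{r+1}} Q^{i_{r+1}} − (k+1) L_{(k+1)i₁...i_r}`
    (hc2 : ∀ k, k ≤ n → ∀ ρ, 1 ≤ ρ → ρ + 2 ≤ m →
      ∀ q (idx : Fin (ρ + 1) → Fin D),
        symT (covTens Γ (L k ρ)) q idx =
          ((ρ + 2 : ℕ) : ℝ) * (∑ j, L k (ρ + 2) q (Fin.snoc idx j) * Q q j)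
            - ((k + 1 : ℕ) : ℝ) * L (k + 1) (ρ + 1) q idx) :
    FirstIntegral Γ Q (fun t q v =>
      (∑ r ∈ Finset.range m, ∑ idx : Fin (r + 1) → Fin D,
        (∑ N ∈ Finset.range (n + 1), L N (r + 1) q idx * t ^ N) *
          ∏ k : Fin (r + 1), v (idx k))
      + s₀ * t ^ (n + 1) / ((n + 1 : ℕ) : ℝ)
      + (∑ N ∈ Finset.range n, dotQ (L N 1) Q q * t ^ (N + 1) / ((N + 1 : ℕ) : ℝ))
      + G q) :=
  stmt1_general Γ Q hQ L G s₀ hLsm hLsym hG hL0 hKT hrec hKT' hs₀ hGc hc1 hc2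
end
end

section
/- (Proposition: LFI 2.) Let λ ≠ 0 and let L_a(q) be a smooth generalized Killing vector of Γ satisfying (L_b Q^b)_{,a} = −λ² L_a. Then I = (e^{λt}/λ)(λ L_a q̇^a + L_a Q^a) is a first integral of q̈^a = −Γ^a_{bc}q̇^bq̇^c − Q^a. -/
/-!
Write `A = L_a q̇^a` and `B = L_a Q^a` along a solution. Differentiating `A` and substituting the
equations of motion, the quadratic terms combine into `L_{(a|b)} q̇^a q̇^b`, which vanishes for a
generalized Killing vector, so `Ȧ = -B`; the condition on `L_b Q^b` gives `Ḃ = -λ² A`. Hence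
`e^{λt} (λ A + B)` has zero derivative, and `I` is this constant divided by `λ`.
-/

noncomputable section
open scoped BigOperators

/-- Covariant derivative of a covector field:
`L_{a|b} = ∂L_a/∂q^b − Γ^s_{ab} L_s`. -/
def covD1 {D : ℕ} (Γ : Conn D) (L : Vec D → Fin D → ℝ) (q : Vec D) (a b : Fin D) : ℝ :=
  pd b (fun p => L p a) q - ∑ s, Γ q s a b * L q s

/-- Generalized Killing vector: `L_{(a|b)} = 0`. -/
def IsGenKV {D : ℕ} (Γ : Conn D) (L : Vec D → Fin D → ℝ) : Prop :=
  ∀ q a b, covD1 Γ L q a b + covD1 Γ L q b a = 0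

section

variable {D : ℕ}

lemma fderiv_apply_eq_sum_pd (f : Vec D → ℝ) (x w : Vec D) :
    fderiv ℝ f x w = ∑ b, w b * pd b f x := by
  conv_lhs => rw [← Finset.univ_sum_single w, map_sum]
  refine Finset.sum_congr rfl fun b _ => ?_
  rw [pd, ← smul_eq_mul, ← map_smul, ← Pi.single_smul, smul_eq_mul, mul_one]

lemma DifferentiableAt.hasDerivAt_comp_eq_sum_pd {f : Vec D → ℝ} {q : ℝ → Vec D}
    {w : Vec D} {t : ℝ} (hf : DifferentiableAt ℝ f (q t)) (hq : HasDerivAt q w t) :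
    HasDerivAt (fun τ => f (q τ)) (∑ b, w b * pd b f (q t)) t := by
  have h := hf.hasFDerivAt.comp_hasDerivAt t hq
  rwa [fderiv_apply_eq_sum_pd] at h

lemma sum_sum_mul_mul_eq_zero_of_antisymm {M : Fin D → Fin D → ℝ}
    (hM : ∀ a b, M a b + M b a = 0) (w : Vec D) :
    ∑ a, ∑ b, M a b * w a * w b = 0 := by
  have hswap : ∑ a, ∑ b, M a b * w a * w b = ∑ a, ∑ b, M b a * w a * w b := by
    rw [Finset.sum_comm]
    exact Finset.sum_congr rfl fun a _ => Finset.sum_congr rfl fun b _ => by ring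
  have hsum : ∑ a, ∑ b, (M a b + M b a) * w a * w b = 0 := by simp [hM]
  simp only [add_mul, Finset.sum_add_distrib, ← hswap] at hsum
  linarith

lemma sum_covD1_mul_mul (Γ : Conn D) (L : Vec D → Fin D → ℝ) (x w : Vec D) :
    ∑ a, ∑ b, covD1 Γ L x a b * w a * w b
      = ∑ a, (∑ b, w b * pd b (fun p => L p a) x) * w a
        - ∑ s, L x s * ∑ a, ∑ b, Γ x s a b * w a * w b := by
  simp only [covD1, sub_mul, Finset.sum_sub_distrib, Finset.sum_mul, Finset.mul_sum]
  congr 1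
  · exact Finset.sum_congr rfl fun a _ => Finset.sum_congr rfl fun b _ => by ring
  · conv_lhs => arg 2; ext a; rw [Finset.sum_comm]
    conv_lhs => rw [Finset.sum_comm]
    exact Finset.sum_congr rfl fun s _ => Finset.sum_congr rfl fun a _ =>
      Finset.sum_congr rfl fun b _ => by ring

lemma IsGenKV.sum_pd_mul_mul_eq {Γ : Conn D} {L : Vec D → Fin D → ℝ} (hKV : IsGenKV Γ L)
    (x w : Vec D) :
    ∑ a, (∑ b, w b * pd b (fun p => L p a) x) * w a
      = ∑ s, L x s * ∑ a, ∑ b, Γ x s a b * w a * w b := by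
  rw [← sub_eq_zero, ← sum_covD1_mul_mul]
  exact sum_sum_mul_mul_eq_zero_of_antisymm (hKV x) w

namespace IsSolutionOn

variable {Γ : Conn D} {Q : Vec D → Fin D → ℝ} {s : Set ℝ} {q v : ℝ → Vec D} {t : ℝ}

lemma hasDerivAt_position (hsol : IsSolutionOn Γ Q s q v) (ht : t ∈ s) :
    HasDerivAt q (v t) t :=
  hasDerivAt_pi.2 fun a => (hsol t ht a).1

lemma hasDerivAt_comp_s4 (hsol : IsSolutionOn Γ Q s q v) (ht : t ∈ s) {f : Vec D → ℝ}
    (hf : Differentiable ℝ f) :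
    HasDerivAt (fun τ => f (q τ)) (∑ b, v t b * pd b f (q t)) t :=
  (hf _).hasDerivAt_comp_eq_sum_pd (hsol.hasDerivAt_position ht)

lemma hasDerivAt_sum_mul_velocity (hsol : IsSolutionOn Γ Q s q v) (ht : t ∈ s)
    {L : Vec D → Fin D → ℝ} (hKV : IsGenKV Γ L) (hL : ∀ a, Differentiable ℝ fun p => L p a) :
    HasDerivAt (fun τ => ∑ a, L (q τ) a * v τ a) (-∑ a, L (q t) a * Q (q t) a) t := by
  have h := HasDerivAt.fun_sum fun a (_ : a ∈ Finset.univ) =>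
    (hsol.hasDerivAt_comp_s4 ht (hL a)).mul (hsol t ht a).2
  refine h.congr_deriv ?_
  simp only [mul_sub, mul_neg, Finset.sum_add_distrib, Finset.sum_sub_distrib,
    Finset.sum_neg_distrib, hKV.sum_pd_mul_mul_eq]
  ring

end IsSolutionOn

lemma hasDerivAt_exp_mul_mul_add {A B : ℝ → ℝ} {lam t : ℝ}
    (hA : HasDerivAt A (-B t) t) (hB : HasDerivAt B (-lam ^ 2 * A t) t) :
    HasDerivAt (fun τ => Real.exp (lam * τ) * (lam * A τ + B τ)) 0 t := by
  have hexp : HasDerivAt (fun τ => Real.exp (lam * τ)) (Real.exp (lam * t) * lam) t := by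
    simpa using ((hasDerivAt_id t).const_mul lam).exp
  refine (hexp.mul ((hA.const_mul lam).add hB)).congr_deriv ?_
  simp only [Pi.add_apply]
  ring

end

theorem stmt4_general {D : ℕ} (lam : ℝ)
    (Γ : Conn D) (Q : Vec D → Fin D → ℝ)
    (hQ : ∀ a, ContDiff ℝ (⊤ : ℕ∞) fun q => Q q a)
    (L : Vec D → Fin D → ℝ)
    (hLsm : ∀ a, ContDiff ℝ (⊤ : ℕ∞) fun q => L q a)
    (hKV : IsGenKV Γ L)
    -- `(L_b Q^b)_{,a} = −λ² L_a`
    (hc : ∀ q (a : Fin D),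
      pd a (fun p => ∑ b, L p b * Q p b) q = -lam ^ 2 * L q a) :
    FirstIntegral Γ Q (fun t q v =>
      Real.exp (lam * t) / lam * (lam * ∑ a, L q a * v a + ∑ a, L q a * Q q a)) := by
  intro a b q v hsol t₁ ht₁ t₂ ht₂
  have hL (i : Fin D) : Differentiable ℝ fun p => L p i := (hLsm i).differentiable (by simp)
  have hLQ : Differentiable ℝ fun p => ∑ i, L p i * Q p i :=
    Differentiable.fun_sum fun i _ => (hL i).mul ((hQ i).differentiable (by simp))
  have hJ : ∀ t ∈ Set.Ioo a b, HasDerivAt (fun τ => Real.exp (lam * τ) *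
      (lam * ∑ i, L (q τ) i * v τ i + ∑ i, L (q τ) i * Q (q τ) i)) 0 t := by
    intro t ht
    refine hasDerivAt_exp_mul_mul_add (hsol.hasDerivAt_sum_mul_velocity ht hKV hL) ?_
    refine (hsol.hasDerivAt_comp_s4 ht hLQ).congr_deriv ?_
    simp only [hc, Finset.mul_sum]
    exact Finset.sum_congr rfl fun i _ => by ring
  have hJ_const := isOpen_Ioo.is_const_of_deriv_eq_zero isPreconnected_Ioo
    (fun t ht => (hJ t ht).differentiableAt.differentiableWithinAt)
    (fun t ht => (hJ t ht).deriv) ht₁ ht₂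
  simp only [div_mul_eq_mul_div, hJ_const]

/-- Proposition: LFI 2. -/
theorem stmt4 {D : ℕ} (lam : ℝ) (hlam : lam ≠ 0)
    (Γ : Conn D) (Q : Vec D → Fin D → ℝ)
    (hΓsym : ∀ q a b c, Γ q a b c = Γ q a c b)
    (hΓ : ∀ a b c, ContDiff ℝ (⊤ : ℕ∞) fun q => Γ q a b c)
    (hQ : ∀ a, ContDiff ℝ (⊤ : ℕ∞) fun q => Q q a)
    (L : Vec D → Fin D → ℝ)
    (hLsm : ∀ a, ContDiff ℝ (⊤ : ℕ∞) fun q => L q a)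
    (hKV : IsGenKV Γ L)
    -- `(L_b Q^b)_{,a} = −λ² L_a`
    (hc : ∀ q (a : Fin D),
      pd a (fun p => ∑ b, L p b * Q p b) q = -lam ^ 2 * L q a) :
    FirstIntegral Γ Q (fun t q v =>
      Real.exp (lam * t) / lam * (lam * ∑ a, L q a * v a + ∑ a, L q a * Q q a)) :=
  stmt4_general lam Γ Q hQ L hLsm hKV hc
end
end
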